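/- Let u^c < 0, let 𝒰 be an open complex neighborhood of u^c, let f and Q be analytic on 𝒰 with f real on 𝒰 ∩ ℝ, f(u^c) = 0 and f'(u^c) > 0, and let P^∞ be the outside parametrix with endpoint u^c. Then the matrix function Δ^(1)(λ) = i Q(λ) (−f(λ))^{−1/2} P^∞(λ) σ₃ P^∞(λ)^{−1} (defined off the cuts, with principal branches) satisfies P^∞(λ) σ₃ P^∞(λ)^{−1} = [[0, −i(u^c − λ)^{−1/2}], [i(u^c − λ)^{1/2}, 0]], extends to a meromorphic function on a neighborhood of u^c with at most a simple pole at u^c, and its residue there equals −Q(u^c) f'(u^c)^{−1/2} [[0, 1], [0, 0]]. -/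

import Mathlib

open Filter Topology Set Matrix

/-- The outside parametrix with endpoint `u^c`:
`P^∞(λ) = (−λ)^{1/4} (u^c − λ)^{−σ₃/4} [[1,1],[i,−i]]`, principal branches. -/
noncomputable def Pinf (uc : ℝ) (lam : ℂ) : Matrix (Fin 2) (Fin 2) ℂ :=
  ((-lam) ^ ((1 : ℂ) / 4)) •
    (Matrix.of ![![((uc : ℂ) - lam) ^ (-(1 / 4) : ℂ), 0],
                 ![0, ((uc : ℂ) - lam) ^ ((1 : ℂ) / 4)]] *
     Matrix.of ![![1, 1], ![Complex.I, -Complex.I]])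

/-- The Pauli matrix `σ₃`. -/
def sigma3 : Matrix (Fin 2) (Fin 2) ℂ := Matrix.of ![![1, 0], ![0, -1]]

/-- The elementary matrix `E₁₂ = [[0,1],[0,0]]`. -/
def E12 : Matrix (Fin 2) (Fin 2) ℂ := Matrix.of ![![0, 1], ![0, 0]]

/-- The order-`ε^{1/7}` jump correction
`Δ^{(1)}(λ) = i Q(λ)(−f(λ))^{−1/2} P^∞(λ) σ₃ P^∞(λ)⁻¹`. -/
noncomputable def Delta1 (uc : ℝ) (f Q : ℂ → ℂ) (lam : ℂ) : Matrix (Fin 2) (Fin 2) ℂ :=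
  (Complex.I * Q lam * (-(f lam)) ^ (-(1 / 2) : ℂ)) •
    (Pinf uc lam * sigma3 * (Pinf uc lam)⁻¹)

lemma part1 (uc : ℝ) (huc : uc < 0) (lam : ℂ) (h : lam.im ≠ 0 ∨ lam.re < uc) :
    Pinf uc lam * sigma3 * (Pinf uc lam)⁻¹ =
      Matrix.of ![![0, -Complex.I * ((uc : ℂ) - lam) ^ (-(1 / 2) : ℂ)],
                  ![Complex.I * ((uc : ℂ) - lam) ^ ((1 : ℂ) / 2), 0]] := by
  set w : ℂ := (uc : ℂ) - lam with hwdef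
  have hw : w ≠ 0 := by
    rcases h with h | h
    · intro h0
      apply h
      have := congrArg Complex.im h0
      simpa [hwdef] using this
    · intro h0
      have := congrArg Complex.re h0
      simp [hwdef] at this
      linarith
  have hlam : -lam ≠ 0 := by
    intro h0
    have hl : lam = 0 := by simpa [neg_eq_zero] using h0
    subst hl
    rcases h with h | h
    · simp at h
    · simp at h; linarith
  have ha : (-lam) ^ ((1 : ℂ) / 4) ≠ 0 := by
    simp [Complex.cpow_eq_zero_iff, hlam]
  have key1 : w ^ (-4⁻¹ : ℂ) = w ^ (-2⁻¹ : ℂ) * w ^ (4⁻¹ : ℂ) := by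
    rw [← Complex.cpow_add _ _ hw]; norm_num
  have key2 : w ^ (4⁻¹ : ℂ) = w ^ (2⁻¹ : ℂ) * w ^ (-4⁻¹ : ℂ) := by
    rw [← Complex.cpow_add _ _ hw]; norm_num
  have key3 : w ^ (-(1 / 4) : ℂ) * w ^ ((1 : ℂ) / 4) = 1 := by
    rw [← Complex.cpow_add _ _ hw]; norm_num
  have hstep : Pinf uc lam * sigma3 =
      Matrix.of ![![0, -Complex.I * w ^ (-(1 / 2) : ℂ)],
                  ![Complex.I * w ^ ((1 : ℂ) / 2), 0]] * Pinf uc lam := by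
    unfold Pinf sigma3
    rw [← hwdef]
    ext i j
    fin_cases i <;> fin_cases j <;>
      simp [Matrix.mul_apply, Fin.sum_univ_succ]
    · linear_combination ((-lam) ^ (4⁻¹ : ℂ)) * key1 +
        ((-lam) ^ (4⁻¹ : ℂ)) * w ^ (-2⁻¹ : ℂ) * w ^ (4⁻¹ : ℂ) * Complex.I_sq
    · linear_combination (-((-lam) ^ (4⁻¹ : ℂ))) * key1 -
        ((-lam) ^ (4⁻¹ : ℂ)) * w ^ (-2⁻¹ : ℂ) * w ^ (4⁻¹ : ℂ) * Complex.I_sq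
    · linear_combination ((-lam) ^ (4⁻¹ : ℂ) * Complex.I) * key2
    · linear_combination ((-lam) ^ (4⁻¹ : ℂ) * Complex.I) * key2
  have hdet : IsUnit (Pinf uc lam).det := by
    apply isUnit_iff_ne_zero.mpr
    have : (Pinf uc lam).det =
        (-lam) ^ ((1 : ℂ) / 4) * (-lam) ^ ((1 : ℂ) / 4) *
          ((w ^ (-(1 / 4) : ℂ) * w ^ ((1 : ℂ) / 4)) * (-2 * Complex.I)) := by
      unfold Pinf
      rw [← hwdef]
      simp [Matrix.det_fin_two, Matrix.mul_apply, Fin.sum_univ_succ]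
      ring
    rw [this, key3]
    have hlam0 : lam ≠ 0 := fun h0 => hlam (by simp [h0])
    simp [ha, Complex.I_ne_zero, Complex.cpow_eq_zero_iff, hlam0]
  calc Pinf uc lam * sigma3 * (Pinf uc lam)⁻¹
      = Matrix.of ![![0, -Complex.I * w ^ (-(1 / 2) : ℂ)],
                  ![Complex.I * w ^ ((1 : ℂ) / 2), 0]] * (Pinf uc lam * (Pinf uc lam)⁻¹) := by
        rw [hstep, Matrix.mul_assoc]
    _ = _ := by rw [Matrix.mul_nonsing_inv _ hdet, Matrix.mul_one]

lemma analyticOnNhd_dslope {f : ℂ → ℂ} {U : Set ℂ} (hf : AnalyticOnNhd ℂ f U)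
    {c : ℂ} (hc : c ∈ U) : AnalyticOnNhd ℂ (dslope f c) U := by
  intro z hz
  by_cases hzc : z = c
  · subst hzc
    obtain ⟨p, hp⟩ := hf z hz
    exact ⟨p.fslope, hp.has_fpower_series_dslope_fslope⟩
  · have h1 : AnalyticAt ℂ (fun w => (w - c)⁻¹ • (f w - f c)) z :=
      ((analyticAt_id.sub analyticAt_const).inv (sub_ne_zero.mpr hzc)).smul
        ((hf z hz).sub analyticAt_const)
    exact h1.congr ((dslope_eventuallyEq_slope_of_ne f hzc).symm.trans
      (by filter_upwards with w; rfl))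

lemma re_f_neg {f : ℂ → ℂ} {U : Set ℂ} (hf : AnalyticOnNhd ℂ f U)
    {uc r : ℝ} (hball : Metric.ball (uc : ℂ) r ⊆ U)
    (hre : ∀ z ∈ Metric.ball (uc : ℂ) r, 0 < (deriv f z).re)
    (hf0 : f ((uc : ℝ) : ℂ) = 0)
    {x : ℝ} (hx : (x : ℂ) ∈ Metric.ball (uc : ℂ) r) (hxlt : x < uc) :
    (f (x : ℂ)).re < 0 := by
  have hseg : ∀ t : ℝ, t ∈ Icc x uc → (t : ℂ) ∈ Metric.ball (uc : ℂ) r := by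
    intro t ht
    have h1 : dist (t : ℂ) (uc : ℂ) = |t - uc| := by
      rw [Complex.dist_eq, ← Complex.ofReal_sub, Complex.norm_real, Real.norm_eq_abs]
    have hxr : |x - uc| < r := by
      have h2 : dist (x : ℂ) (uc : ℂ) = |x - uc| := by
        rw [Complex.dist_eq, ← Complex.ofReal_sub, Complex.norm_real, Real.norm_eq_abs]
      rw [← h2]; exact hx
    rw [Metric.mem_ball, h1]
    rw [abs_lt] at hxr ⊢
    constructor
    · linarith [ht.1]
    · linarith [ht.2]
  have hderiv : ∀ t : ℝ, t ∈ Icc x uc →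
      HasDerivAt (fun s : ℝ => (f (s : ℂ)).re) ((deriv f (t : ℂ)).re) t := by
    intro t ht
    exact ((hf _ (hball (hseg t ht))).differentiableAt.hasDerivAt).real_of_complex
  have hmono : StrictMonoOn (fun s : ℝ => (f (s : ℂ)).re) (Icc x uc) := by
    apply strictMonoOn_of_hasDerivWithinAt_pos (convex_Icc x uc)
      (fun t ht => (hderiv t ht).continuousAt.continuousWithinAt)
      (f' := fun t => (deriv f (t : ℂ)).re)
    · intro t ht
      rw [interior_Icc] at ht
      exact ((hderiv t (Ioo_subset_Icc_self ht)).hasDerivWithinAt)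
    · intro t ht
      rw [interior_Icc] at ht
      exact hre _ (hseg t (Ioo_subset_Icc_self ht))
  have h0 : (f ((uc : ℝ) : ℂ)).re = 0 := by rw [hf0]; rfl
  have := hmono (Set.left_mem_Icc.mpr hxlt.le) (Set.right_mem_Icc.mpr hxlt.le) hxlt
  simpa [h0] using this

lemma im_f_ne_zero {f : ℂ → ℂ} {U : Set ℂ} (hf : AnalyticOnNhd ℂ f U)
    {uc r : ℝ} (hball : Metric.ball (uc : ℂ) r ⊆ U)
    (hre : ∀ z ∈ Metric.ball (uc : ℂ) r, 0 < (deriv f z).re)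
    (hreal : ∀ x : ℝ, (x : ℂ) ∈ U → (f (x : ℂ)).im = 0)
    {z : ℂ} (hz : z ∈ Metric.ball (uc : ℂ) r) (hzim : z.im ≠ 0) :
    (f z).im ≠ 0 := by
  set x : ℝ := z.re with hxdef
  set y : ℝ := z.im with hydef
  have hseg : ∀ t : ℝ, |t| ≤ |y| → ((x : ℂ) + t * Complex.I) ∈ Metric.ball (uc : ℂ) r := by
    intro t ht
    rw [Metric.mem_ball, Complex.dist_eq] at hz ⊢
    have he1 : ‖(x : ℂ) + t * Complex.I - uc‖ ≤ ‖z - uc‖ := by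
      rw [Complex.norm_def, Complex.norm_def]
      apply Real.sqrt_le_sqrt
      simp only [Complex.normSq_apply, Complex.sub_re, Complex.add_re, Complex.ofReal_re,
        Complex.mul_re, Complex.I_re, Complex.I_im, Complex.ofReal_im, Complex.sub_im,
        Complex.add_im, Complex.mul_im]
      have h2 : t ^ 2 ≤ y ^ 2 := by
        rw [← sq_abs t, ← sq_abs y]; exact pow_le_pow_left₀ (abs_nonneg t) ht 2
      nlinarith [sq_nonneg (x - uc), h2]
    exact lt_of_le_of_lt he1 hz
  have hderiv : ∀ t : ℝ, |t| ≤ |y| →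
      HasDerivAt (fun s : ℝ => (f ((x : ℂ) + s * Complex.I)).im)
        ((deriv f ((x : ℂ) + t * Complex.I)).re) t := by
    intro t ht
    have hγ : HasDerivAt (fun s : ℝ => (x : ℂ) + s * Complex.I) Complex.I t := by
      simpa using (((Complex.ofRealCLM.hasDerivAt (x := t))).mul_const Complex.I).const_add (x : ℂ)
    have hfd : HasDerivAt f (deriv f ((x : ℂ) + t * Complex.I)) ((x : ℂ) + t * Complex.I) :=
      (hf _ (hball (hseg t ht))).differentiableAt.hasDerivAt
    have hcomp := hfd.scomp t hγ
    have := Complex.imCLM.hasFDerivAt.comp_hasDerivAt t hcomp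
    simpa [Complex.smul_re, Complex.smul_im, Function.comp_def] using this
  have hmono : StrictMonoOn (fun s : ℝ => (f ((x : ℂ) + s * Complex.I)).im)
      (Icc (min 0 y) (max 0 y)) := by
    have habs : ∀ t : ℝ, t ∈ Icc (min 0 y) (max 0 y) → |t| ≤ |y| := by
      intro t ht
      rw [abs_le]
      rcases le_total 0 y with hy | hy
      · simp [min_eq_left hy, max_eq_right hy] at ht
        constructor
        · linarith [ht.1, abs_nonneg y]
        · linarith [ht.2, le_abs_self y]
      · simp [min_eq_right hy, max_eq_left hy] at ht
        constructor
        · linarith [ht.1, neg_abs_le y]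
        · linarith [ht.2, abs_nonneg y]
    apply strictMonoOn_of_hasDerivWithinAt_pos (convex_Icc _ _)
      (fun t ht => (hderiv t (habs t ht)).continuousAt.continuousWithinAt)
      (f' := fun t => (deriv f ((x : ℂ) + t * Complex.I)).re)
    · intro t ht
      rw [interior_Icc] at ht
      exact ((hderiv t (habs t (Ioo_subset_Icc_self ht))).hasDerivWithinAt)
    · intro t ht
      rw [interior_Icc] at ht
      exact hre _ (hseg t (habs t (Ioo_subset_Icc_self ht)))
  have h0mem : (0 : ℝ) ∈ Icc (min 0 y) (max 0 y) := ⟨min_le_left _ _, le_max_left _ _⟩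
  have hymem : y ∈ Icc (min 0 y) (max 0 y) := ⟨min_le_right _ _, le_max_right _ _⟩
  have hx0 : ((x : ℂ) + ((0 : ℝ) : ℂ) * Complex.I) = (x : ℂ) := by simp
  have h00 : (f ((x : ℂ) + ((0 : ℝ) : ℂ) * Complex.I)).im = 0 := by
    rw [hx0]
    exact hreal x (hball (by simpa [hx0] using hseg 0 (by simp)))
  have hzeq : (x : ℂ) + (y : ℂ) * Complex.I = z := Complex.re_add_im z
  rcases lt_or_gt_of_ne hzim with hy | hy
  · have h2 := hmono hymem h0mem hy
    simp only [h00, hzeq] at h2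
    exact ne_of_lt h2
  · have h2 := hmono h0mem hymem hy
    simp only [h00, hzeq] at h2
    exact ne_of_gt h2

lemma real_point_eq {a b : ℝ} (ha : 0 < a) (hb : 0 < b) :
    ((a : ℂ)) ^ (-(1 / 2) : ℂ) * ((b : ℂ)) ^ (-(1 / 2) : ℂ) =
      ((b : ℂ))⁻¹ * (((a / b : ℝ) : ℂ)) ^ (-(1 / 2) : ℂ) := by
  have hcast : ((-(1 / 2) : ℝ) : ℂ) = (-(1 / 2) : ℂ) := by norm_num
  have e1 : ((a : ℂ)) ^ (-(1 / 2) : ℂ) = ((a ^ (-(1 / 2) : ℝ) : ℝ) : ℂ) := by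
    rw [Complex.ofReal_cpow ha.le, hcast]
  have e2 : ((b : ℂ)) ^ (-(1 / 2) : ℂ) = ((b ^ (-(1 / 2) : ℝ) : ℝ) : ℂ) := by
    rw [Complex.ofReal_cpow hb.le, hcast]
  have e3 : (((a / b : ℝ) : ℂ)) ^ (-(1 / 2) : ℂ) = (((a / b) ^ (-(1 / 2) : ℝ) : ℝ) : ℂ) := by
    rw [Complex.ofReal_cpow (div_nonneg ha.le hb.le), hcast]
  rw [e1, e2, e3]
  rw [← Complex.ofReal_inv, ← Complex.ofReal_mul, ← Complex.ofReal_mul]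
  congr 1
  have hkey : b ^ (-(1 / 2) : ℝ) * b ^ (-(1 / 2) : ℝ) = b⁻¹ := by
    rw [← Real.rpow_add hb]
    norm_num [Real.rpow_neg_one]
  rw [Real.div_rpow ha.le hb.le, ← hkey]
  have hbne : b ^ (-(1 / 2) : ℝ) ≠ 0 := (Real.rpow_pos_of_pos hb _).ne'
  field_simp

/-- `P^∞ σ₃ (P^∞)⁻¹ = [[0, −i(u^c−λ)^{−1/2}],[i(u^c−λ)^{1/2}, 0]]`, and
`Δ^{(1)}` extends meromorphically near `u^c` with at most a simple pole at `u^c`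
whose residue is `−Q(u^c) f'(u^c)^{−1/2} [[0,1],[0,0]]`. -/
theorem Delta1_residue
    (uc : ℝ) (huc : uc < 0)
    (𝒰 : Set ℂ) (hUopen : IsOpen 𝒰) (hUmem : (uc : ℂ) ∈ 𝒰)
    (f Q : ℂ → ℂ) (hf : AnalyticOnNhd ℂ f 𝒰) (hQ : AnalyticOnNhd ℂ Q 𝒰)
    (hfreal : ∀ x : ℝ, (x : ℂ) ∈ 𝒰 → (f (x : ℂ)).im = 0)
    (hf0 : f (uc : ℂ) = 0)
    (hf'im : (deriv f (uc : ℂ)).im = 0) (hf'pos : 0 < (deriv f (uc : ℂ)).re) :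
    (∀ lam : ℂ, (lam.im ≠ 0 ∨ lam.re < uc) →
      Pinf uc lam * sigma3 * (Pinf uc lam)⁻¹ =
        Matrix.of ![![0, -Complex.I * ((uc : ℂ) - lam) ^ (-(1 / 2) : ℂ)],
                    ![Complex.I * ((uc : ℂ) - lam) ^ ((1 : ℂ) / 2), 0]]) ∧
    ∃ V : Set ℂ, IsOpen V ∧ (uc : ℂ) ∈ V ∧ V ⊆ 𝒰 ∧
      ∃ H : ℂ → Matrix (Fin 2) (Fin 2) ℂ,
        (∀ i j : Fin 2, AnalyticOnNhd ℂ (fun lam => H lam i j) V) ∧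
        ∀ lam ∈ V, (lam.im ≠ 0 ∨ lam.re < uc) → lam ≠ (uc : ℂ) →
          Delta1 uc f Q lam =
            (lam - (uc : ℂ))⁻¹ •
              ((-(Q (uc : ℂ)) * (deriv f (uc : ℂ)) ^ (-(1 / 2) : ℂ)) • E12)
            + H lam := by
  refine ⟨fun lam h => part1 uc huc lam h, ?_⟩
  -- the analytic factor `g` with `f z = (z - uc) * g z`
  set g : ℂ → ℂ := dslope f (uc : ℂ) with hgdef
  have hg_an : AnalyticOnNhd ℂ g 𝒰 := analyticOnNhd_dslope hf hUmem
  have hgc : g (uc : ℂ) = deriv f (uc : ℂ) := dslope_same f _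
  have hderiv_an : AnalyticOnNhd ℂ (deriv f) 𝒰 := hf.deriv
  -- choose a good radius r
  have h1 : ∀ᶠ z in 𝓝 (uc : ℂ), 0 < (g z).re := by
    have hc : ContinuousAt (fun z => (g z).re) (uc : ℂ) :=
      Complex.continuous_re.continuousAt.comp (hg_an _ hUmem).continuousAt
    have h0 : 0 < (g (uc : ℂ)).re := by rw [hgc]; exact hf'pos
    exact hc.eventually (eventually_gt_nhds h0)
  have h2 : ∀ᶠ z in 𝓝 (uc : ℂ), 0 < (deriv f z).re := by
    have hc : ContinuousAt (fun z => (deriv f z).re) (uc : ℂ) :=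
      Complex.continuous_re.continuousAt.comp (hderiv_an _ hUmem).continuousAt
    exact hc.eventually (eventually_gt_nhds hf'pos)
  have h3 : ∀ᶠ z in 𝓝 (uc : ℂ), z ∈ 𝒰 := hUopen.eventually_mem hUmem
  obtain ⟨r, hr, hball⟩ := Metric.eventually_nhds_iff_ball.mp ((h1.and h2).and h3)
  set V : Set ℂ := Metric.ball (uc : ℂ) r with hVdef
  have hVsub : V ⊆ 𝒰 := fun z hz => (hball z hz).2
  have hgpos : ∀ z ∈ V, 0 < (g z).re := fun z hz => (hball z hz).1.1
  have hdpos : ∀ z ∈ V, 0 < (deriv f z).re := fun z hz => (hball z hz).1.2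
  have hgslit : ∀ z ∈ V, g z ∈ Complex.slitPlane := fun z hz => Or.inl (hgpos z hz)
  have hucV : (uc : ℂ) ∈ V := Metric.mem_ball_self hr
  refine ⟨V, Metric.isOpen_ball, hucV, hVsub, ?_⟩
  -- the analytic pieces of H
  set φ : ℂ → ℂ := fun z => -(Q z) * (g z) ^ (-(1 / 2) : ℂ) with hφdef
  have hφ_an : AnalyticOnNhd ℂ φ V :=
    ((hQ.mono hVsub).neg).mul ((hg_an.mono hVsub).cpow analyticOnNhd_const hgslit)
  set ψ : ℂ → ℂ := dslope φ (uc : ℂ) with hψdef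
  have hψ_an : AnalyticOnNhd ℂ ψ V := analyticOnNhd_dslope hφ_an hucV
  refine ⟨fun lam => Matrix.of ![![0, ψ lam], ![φ lam, 0]], ?_, ?_⟩
  · intro i j
    fin_cases i <;> fin_cases j
    · simpa using (analyticOnNhd_const : AnalyticOnNhd ℂ (fun _ : ℂ => (0 : ℂ)) V)
    · simpa using hψ_an
    · simpa using hφ_an
    · simpa using (analyticOnNhd_const : AnalyticOnNhd ℂ (fun _ : ℂ => (0 : ℂ)) V)
  · intro lam hlamV hcut hne
    -- the slit region V'
    set V' : Set ℂ := V ∩ {z : ℂ | z.im ≠ 0 ∨ z.re < uc} with hV'def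
    have hV'sub : V' ⊆ V := inter_subset_left
    have hV'subU : V' ⊆ 𝒰 := hV'sub.trans hVsub
    have hV'open : IsOpen V' := by
      apply Metric.isOpen_ball.inter
      have e : {z : ℂ | z.im ≠ 0 ∨ z.re < uc} =
          (Complex.im ⁻¹' ({0}ᶜ)) ∪ {z : ℂ | z.re < uc} := by
        ext z; simp [Set.mem_setOf_eq]
      rw [e]
      exact (Complex.continuous_im.isOpen_preimage _ isOpen_compl_singleton).union
        (isOpen_lt Complex.continuous_re continuous_const)
    have hne'' : ∀ z ∈ V', z - (uc : ℂ) ≠ 0 := by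
      intro z hz h0
      have hz0 : z = (uc : ℂ) := sub_eq_zero.mp h0
      rcases hz.2 with h | h
      · rw [hz0] at h; simp at h
      · rw [hz0] at h; simp at h
    have hslit_w : ∀ z ∈ V', (uc : ℂ) - z ∈ Complex.slitPlane := by
      intro z hz
      rcases hz.2 with h | h
      · right; simpa using h
      · left; simp [Complex.sub_re]; linarith
    have hslit_f : ∀ z ∈ V', -(f z) ∈ Complex.slitPlane := by
      intro z hz
      by_cases him : z.im = 0
      · left
        have hre : z.re < uc := by
          rcases hz.2 with h | h
          · exact absurd him h
          · exact h
        have hzeq : z = ((z.re : ℝ) : ℂ) := by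
          apply Complex.ext <;> simp [him]
        have := re_f_neg hf hVsub hdpos hf0 (x := z.re) (by rw [← hzeq]; exact hz.1) hre
        rw [← hzeq] at this
        simpa using this
      · right
        have := im_f_ne_zero hf hVsub hdpos hfreal hz.1 him
        simpa using this
    -- the two functions to compare
    set F : ℂ → ℂ := fun z => (-(f z)) ^ (-(1 / 2) : ℂ) * ((uc : ℂ) - z) ^ (-(1 / 2) : ℂ)
      with hFdef
    set G : ℂ → ℂ := fun z => -((z - (uc : ℂ))⁻¹) * (g z) ^ (-(1 / 2) : ℂ) with hGdef
    have hFan : AnalyticOnNhd ℂ F V' :=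
      (((hf.mono hV'subU).neg).cpow analyticOnNhd_const hslit_f).mul
        ((analyticOnNhd_const.sub analyticOnNhd_id).cpow analyticOnNhd_const hslit_w)
    have hGan : AnalyticOnNhd ℂ G V' :=
      (((analyticOnNhd_id.sub analyticOnNhd_const).inv hne'').neg).mul
        ((hg_an.mono hV'subU).cpow analyticOnNhd_const
          (fun z hz => hgslit z (hV'sub hz)))
    -- V' is preconnected
    have hpre : IsPreconnected V' := by
      have hA : Convex ℝ (V ∩ {z : ℂ | 0 < z.im}) :=
        (convex_ball _ _).inter (convex_halfSpace_im_gt 0)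
      have hB : Convex ℝ (V ∩ {z : ℂ | z.im < 0}) :=
        (convex_ball _ _).inter (convex_halfSpace_im_lt 0)
      have hC : Convex ℝ (V ∩ {z : ℂ | z.re < uc}) :=
        (convex_ball _ _).inter (convex_halfSpace_re_lt uc)
      have hmemV : ∀ s : ℝ, |s| ≤ r / 4 →
          ((uc - r / 2 : ℝ) : ℂ) + (s : ℂ) * Complex.I ∈ V := by
        intro s hs
        rw [hVdef, Metric.mem_ball, Complex.dist_eq, Complex.norm_def]
        rw [Real.sqrt_lt' hr]
        have hs2 : s ^ 2 ≤ (r / 4) ^ 2 := by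
          rw [← sq_abs s]
          exact pow_le_pow_left₀ (abs_nonneg s) hs 2
        simp only [Complex.normSq_apply, Complex.sub_re, Complex.add_re, Complex.ofReal_re,
          Complex.mul_re, Complex.I_re, Complex.I_im, Complex.ofReal_im, Complex.sub_im,
          Complex.add_im, Complex.mul_im]
        nlinarith [hr]
      have hp1 : ((uc - r / 2 : ℝ) : ℂ) + ((r / 4 : ℝ) : ℂ) * Complex.I ∈
          (V ∩ {z : ℂ | 0 < z.im}) ∩ (V ∩ {z : ℂ | z.re < uc}) := by
        have habs : |r / 4| ≤ r / 4 := le_of_eq (abs_of_pos (by linarith))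
        refine ⟨⟨hmemV _ habs, ?_⟩, hmemV _ habs, ?_⟩ <;> simp <;> linarith
      have hp2 : ((uc - r / 2 : ℝ) : ℂ) + ((-(r / 4) : ℝ) : ℂ) * Complex.I ∈
          (V ∩ {z : ℂ | z.re < uc}) ∩ (V ∩ {z : ℂ | z.im < 0}) := by
        have habs : |(-(r / 4))| ≤ r / 4 := le_of_eq (by rw [abs_neg]; exact abs_of_pos (by linarith))
        refine ⟨⟨hmemV _ habs, ?_⟩, hmemV _ habs, ?_⟩ <;> simp <;> linarith
      have hAC : IsPreconnected ((V ∩ {z : ℂ | 0 < z.im}) ∪ (V ∩ {z : ℂ | z.re < uc})) :=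
        IsPreconnected.union _ hp1.1 hp1.2 (hA.isPreconnected) (hC.isPreconnected)
      have hACB : IsPreconnected (((V ∩ {z : ℂ | 0 < z.im}) ∪ (V ∩ {z : ℂ | z.re < uc})) ∪
          (V ∩ {z : ℂ | z.im < 0})) :=
        IsPreconnected.union _ (Or.inr hp2.1) hp2.2 hAC (hB.isPreconnected)
      have heq : V' = ((V ∩ {z : ℂ | 0 < z.im}) ∪ (V ∩ {z : ℂ | z.re < uc})) ∪
          (V ∩ {z : ℂ | z.im < 0}) := by
        ext z
        simp only [hV'def, Set.mem_inter_iff, Set.mem_union, Set.mem_setOf_eq]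
        constructor
        · rintro ⟨hzV, h | h⟩
          · rcases lt_or_gt_of_ne h with h' | h'
            · exact Or.inr ⟨hzV, h'⟩
            · exact Or.inl (Or.inl ⟨hzV, h'⟩)
          · exact Or.inl (Or.inr ⟨hzV, h⟩)
        · rintro ((⟨hzV, h⟩ | ⟨hzV, h⟩) | ⟨hzV, h⟩)
          · exact ⟨hzV, Or.inl (ne_of_gt h)⟩
          · exact ⟨hzV, Or.inr h⟩
          · exact ⟨hzV, Or.inl (ne_of_lt h)⟩
      rw [heq]
      exact hACB
    -- a real basepoint and frequent equality
    have hrealpt : ∀ x : ℝ, (x : ℂ) ∈ V → x < uc → F (x : ℂ) = G (x : ℂ) := by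
      intro x hxV hxlt
      have hxU : (x : ℂ) ∈ 𝒰 := hVsub hxV
      have hfim : (f (x : ℂ)).im = 0 := hfreal x hxU
      have hfre : (f (x : ℂ)).re < 0 := re_f_neg hf hVsub hdpos hf0 hxV hxlt
      set a : ℝ := -(f (x : ℂ)).re with hadef
      set b : ℝ := uc - x with hbdef
      have ha : 0 < a := by rw [hadef]; linarith
      have hb : 0 < b := by rw [hbdef]; linarith
      have hfa : -(f (x : ℂ)) = ((a : ℝ) : ℂ) := by
        apply Complex.ext <;> simp [hadef, hfim]
      have hfa' : f (x : ℂ) = -((a : ℝ) : ℂ) := by rw [← hfa, neg_neg]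
      have hwb : (uc : ℂ) - (x : ℂ) = ((b : ℝ) : ℂ) := by rw [hbdef]; push_cast; ring
      have hxb : (x : ℂ) - (uc : ℂ) = -((b : ℝ) : ℂ) := by rw [hbdef]; push_cast; ring
      have hxne : (x : ℂ) ≠ (uc : ℂ) := by
        intro hcontra
        rw [Complex.ofReal_inj] at hcontra
        exact hxlt.ne hcontra
      have hgx : g (x : ℂ) = (((a / b : ℝ)) : ℂ) := by
        rw [hgdef, dslope_of_ne f hxne, slope_def_field, hf0, sub_zero, hfa', hxb,
          neg_div_neg_eq, Complex.ofReal_div]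
      show (-(f (x : ℂ))) ^ (-(1 / 2) : ℂ) * ((uc : ℂ) - (x : ℂ)) ^ (-(1 / 2) : ℂ) =
        -(((x : ℂ) - (uc : ℂ))⁻¹) * (g (x : ℂ)) ^ (-(1 / 2) : ℂ)
      rw [hfa, hwb, hgx, hxb, inv_neg, neg_neg]
      exact real_point_eq ha hb
    have hx0V : ((uc - r / 2 : ℝ) : ℂ) ∈ V := by
      rw [hVdef, Metric.mem_ball, Complex.dist_eq, ← Complex.ofReal_sub, Complex.norm_real, Real.norm_eq_abs]
      rw [show uc - r / 2 - uc = -(r / 2) by ring, abs_neg, abs_of_pos (by linarith)]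
      linarith
    have hx0V' : ((uc - r / 2 : ℝ) : ℂ) ∈ V' := by
      refine ⟨hx0V, Or.inr ?_⟩
      simp
      linarith
    have hfreq : ∃ᶠ z in 𝓝[≠] ((uc - r / 2 : ℝ) : ℂ), F z = G z := by
      have hseq : Tendsto (fun n : ℕ => ((uc - r / 2 - r / 4 * (1 / ((n : ℝ) + 1)) : ℝ) : ℂ))
          atTop (𝓝[≠] ((uc - r / 2 : ℝ) : ℂ)) := by
        apply tendsto_nhdsWithin_of_tendsto_nhds_of_eventually_within
        · have hreal : Tendsto (fun n : ℕ => (uc - r / 2 - r / 4 * (1 / ((n : ℝ) + 1)) : ℝ))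
              atTop (𝓝 (uc - r / 2)) := by
            have h0 := tendsto_one_div_add_atTop_nhds_zero_nat (𝕜 := ℝ)
            have h1 : Tendsto (fun n : ℕ => r / 4 * (1 / ((n : ℝ) + 1))) atTop (𝓝 0) := by
              simpa using h0.const_mul (r / 4)
            simpa using tendsto_const_nhds.sub h1
          exact (Complex.continuous_ofReal.continuousAt.tendsto).comp hreal
        · apply Filter.Eventually.of_forall
          intro n
          simp only [Set.mem_compl_iff, Set.mem_singleton_iff, ne_eq, Complex.ofReal_inj]
          intro hcontra
          have hpos : 0 < r / 4 * (1 / ((n : ℝ) + 1)) := by positivity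
          nlinarith [hcontra]
      apply hseq.frequently
      apply Filter.Frequently.of_forall
      intro n
      have h1n : 0 < 1 / ((n : ℝ) + 1) := by positivity
      have h1n' : 1 / ((n : ℝ) + 1) ≤ 1 := by
        rw [div_le_one (by positivity)]
        linarith [Nat.cast_nonneg (α := ℝ) n]
      apply hrealpt
      · rw [hVdef, Metric.mem_ball, Complex.dist_eq, ← Complex.ofReal_sub, Complex.norm_real, Real.norm_eq_abs]
        rw [show uc - r / 2 - r / 4 * (1 / ((n : ℝ) + 1)) - uc
            = -(r / 2 + r / 4 * (1 / ((n : ℝ) + 1))) by ring, abs_neg,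
          abs_of_pos (by positivity)]
        nlinarith
      · nlinarith
    have hEq : EqOn F G V' :=
      hFan.eqOn_of_preconnected_of_frequently_eq hGan hpre hx0V' hfreq
    have KEY : F lam = G lam := hEq ⟨hlamV, hcut⟩
    -- final computation
    simp only [hFdef, hGdef] at KEY
    have hlu : lam - (uc : ℂ) ≠ 0 := sub_ne_zero.mpr hne
    have hw : (uc : ℂ) - lam ≠ 0 := sub_ne_zero.mpr (Ne.symm hne)
    have KEY2 : (-(f lam)) ^ (-(1 / 2) : ℂ) * ((uc : ℂ) - lam) ^ (-(1 / 2) : ℂ) * (lam - uc)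
        = -((g lam) ^ (-(1 / 2) : ℂ)) := by
      rw [KEY]
      field_simp
    have hinv : (lam - (uc : ℂ)) * (lam - (uc : ℂ))⁻¹ = 1 := mul_inv_cancel₀ hlu
    have keyw : ((uc : ℂ) - lam) ^ ((1 : ℂ) / 2) =
        ((uc : ℂ) - lam) * ((uc : ℂ) - lam) ^ (-(1 / 2) : ℂ) := by
      have h := Complex.cpow_add (1 : ℂ) (-(1 / 2) : ℂ) hw
      rw [Complex.cpow_one, show (1 : ℂ) + -(1 / 2) = 1 / 2 by norm_num] at h
      exact h
    have hψ' : ψ lam = (φ lam - φ (uc : ℂ)) / (lam - (uc : ℂ)) := by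
      rw [hψdef, dslope_of_ne φ hne, slope_def_field]
    have hφlam : φ lam = -(Q lam) * (g lam) ^ (-(1 / 2) : ℂ) := rfl
    have hφuc : φ (uc : ℂ) = -(Q (uc : ℂ)) * (deriv f (uc : ℂ)) ^ (-(1 / 2) : ℂ) := by
      show -(Q (uc : ℂ)) * (g (uc : ℂ)) ^ (-(1 / 2) : ℂ) = _
      rw [hgc]
    have e2 : (-(1 / 2) : ℂ) = -2⁻¹ := by norm_num
    have e1 : ((1 : ℂ) / 2) = 2⁻¹ := by norm_num
    rw [e2] at KEY2 hφuc hφlam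
    rw [e2] at keyw
    rw [e1] at keyw
    rw [Delta1, part1 uc huc lam hcut]
    ext i j
    fin_cases i <;> fin_cases j <;>
      simp [E12, Matrix.smul_apply, Matrix.add_apply, smul_eq_mul]
    · rw [hψ', hφuc, hφlam]
      linear_combination ((lam - (uc : ℂ))⁻¹ * Q lam) * KEY2 +
        (-(Q lam) * (-f lam) ^ (-2⁻¹ : ℂ) * ((uc : ℂ) - lam) ^ (-2⁻¹ : ℂ)) * hinv +
        (-(Q lam) * (-f lam) ^ (-2⁻¹ : ℂ) * ((uc : ℂ) - lam) ^ (-2⁻¹ : ℂ)) * Complex.I_sq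
    · rw [hφlam]
      linear_combination (Q lam) * KEY2 + (-(Q lam) * (-f lam) ^ (-2⁻¹ : ℂ)) * keyw +
        (Q lam * (-f lam) ^ (-2⁻¹ : ℂ) * ((uc : ℂ) - lam) ^ (2⁻¹ : ℂ)) * Complex.I_sq
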